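/- arXiv:2605.11320 — 2 statements merged into one kernel-verified Lean document; each statement's English description precedes it below -/
import Mathlib

section
/- For t ≥ 1 and k ≥ 4, the induced matching number of GA(t,k)' equals t; that is, the largest set of edges that forms an induced subgraph consisting of pairwise disjoint edges has size exactly t. -/
/-- `GA(t,k)'`: the Generalized Andrásfai graph `GA(t,k)` on `ℤ/(t(k-1)+2)ℤ` with the
edges of the exterior Hamiltonian cycle removed: vertices `i < j` are adjacent iff
`j - i ≡ 1 (mod t)` and `j - i ∉ {1, n-1}` where `n = t(k-1)+2`. -/
def GA' (t k : ℕ) : SimpleGraph (ZMod (t * (k - 1) + 2)) :=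
  SimpleGraph.fromRel fun x y =>
    (y - x).val % t = 1 % t ∧ (y - x).val ≠ 1 ∧ (y - x).val ≠ t * (k - 1) + 1

open SimpleGraph

section
variable {t k : ℕ}

local notation "n" => t * (k - 1) + 2

instance myNeZero (t k : ℕ) : NeZero (t * (k - 1) + 2) := ⟨by omega⟩

lemma n_big (ht : 1 ≤ t) (hk : 4 ≤ k) : 3 * t + 2 ≤ n := by
  have : 3 * t ≤ t * (k - 1) := by
    calc 3 * t = t * 3 := by ring
    _ ≤ t * (k - 1) := Nat.mul_le_mul_left t (by omega)
  omega

lemma n_mod : (n : ℕ) % t = 2 % t := Nat.mul_add_mod t (k-1) 2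

lemma ge_t_succ (ht : 1 ≤ t) {d : ℕ} (h : d % t = 1 % t) (h1 : d ≠ 1) (h0 : d ≠ 0) :
    t + 1 ≤ d := by
  rcases Nat.eq_or_lt_of_le ht with h' | h'
  · omega
  · have h1t : 1 % t = 1 := Nat.mod_eq_of_lt h'
    rw [h1t] at h
    have hd := Nat.div_add_mod d t
    rcases Nat.eq_zero_or_pos (d / t) with hq | hq
    · rw [hq, Nat.mul_zero] at hd; omega
    · have : t * 1 ≤ t * (d / t) := Nat.mul_le_mul_left t hq
      omega

lemma flip_cond (v : ℕ) (h1 : 1 ≤ v) (h2 : v ≤ n - 1)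
    (h : (n - v) % t = 1 % t ∧ n - v ≠ 1 ∧ n - v ≠ n - 1) :
    v % t = 1 % t ∧ v ≠ 1 ∧ v ≠ n - 1 := by
  obtain ⟨hm, ha, hb⟩ := h
  refine ⟨?_, by omega, by omega⟩
  have e1 : n - v ≡ 1 [MOD t] := hm
  have e2 : (n : ℕ) ≡ 2 [MOD t] := n_mod
  have e3 : (n - v) + v ≡ 1 + v [MOD t] := e1.add_right v
  rw [show (n - v) + v = n from by omega] at e3
  have e4 : 1 + v ≡ 1 + 1 [MOD t] := (e3.symm.trans e2)
  exact Nat.ModEq.add_left_cancel' 1 e4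

lemma val_sub_of_lt {a b : ZMod n} (h : a.val < b.val) :
    (b - a).val = b.val - a.val := by
  have hb : b = ((b.val : ℕ) : ZMod n) := by rw [ZMod.natCast_val, ZMod.cast_id]
  have ha : a = ((a.val : ℕ) : ZMod n) := by rw [ZMod.natCast_val, ZMod.cast_id]
  have : b - a = (((b.val - a.val : ℕ)) : ZMod n) := by
    rw [Nat.cast_sub (le_of_lt h)]; rw [← hb, ← ha]
  rw [this, ZMod.val_cast_of_lt]
  have := b.val_lt
  omega

lemma val_sub_of_lt' {a b : ZMod n} (h : a.val < b.val) :
    (a - b).val = n - (b.val - a.val) := by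
  have hne : b - a ≠ 0 := by
    intro h0
    have := val_sub_of_lt h
    rw [h0] at this
    simp [ZMod.val_zero] at this
    omega
  have h2 : a - b = -(b - a) := by ring
  rw [h2, ZMod.neg_val, if_neg hne, val_sub_of_lt h]

lemma adj_iff {x y : ZMod n} (hxy : x ≠ y) :
    (GA' t k).Adj x y ↔
      ((y - x).val % t = 1 % t ∧ (y - x).val ≠ 1 ∧ (y - x).val ≠ t * (k - 1) + 1) := by
  rw [GA', SimpleGraph.fromRel_adj]
  have hyx : x.val ≠ y.val := fun h => hxy (ZMod.val_injective _ h)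
  have key : ∀ u v : ZMod n, u.val < v.val →
      (((u - v).val % t = 1 % t ∧ (u-v).val ≠ 1 ∧ (u-v).val ≠ t*(k-1)+1) →
       ((v - u).val % t = 1 % t ∧ (v-u).val ≠ 1 ∧ (v-u).val ≠ t*(k-1)+1)) := by
    intro u v huv hcond
    rw [val_sub_of_lt' huv] at hcond
    rw [val_sub_of_lt huv]
    have h1 : 1 ≤ v.val - u.val := by omega
    have h2 : v.val - u.val ≤ n - 1 := by have := v.val_lt; omega
    have := flip_cond (t := t) (k := k) (v.val - u.val) h1 h2
    simp only [show n - 1 = t*(k-1)+1 from by omega] at this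
    exact this hcond
  have key' : ∀ u v : ZMod n, u.val < v.val →
      (((v - u).val % t = 1 % t ∧ (v-u).val ≠ 1 ∧ (v-u).val ≠ t*(k-1)+1) →
       ((u - v).val % t = 1 % t ∧ (u-v).val ≠ 1 ∧ (u-v).val ≠ t*(k-1)+1)) := by
    intro u v huv hcond
    rw [val_sub_of_lt huv] at hcond
    rw [val_sub_of_lt' huv]
    set d := v.val - u.val with hd
    have hdlt : d ≤ n - 1 := by have := v.val_lt; omega
    have h1 : 1 ≤ n - d := by omega
    have h2 : n - d ≤ n - 1 := by omega
    have := flip_cond (t := t) (k := k) (n - d) h1 h2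
    simp only [show n - 1 = t*(k-1)+1 from by omega, show n - (n - d) = d from by omega] at this
    exact this hcond
  constructor
  · rintro ⟨-, h | h⟩
    · exact h
    · rcases lt_or_gt_of_ne hyx with hlt | hlt
      · exact key x y hlt h
      · exact key' y x hlt h
  · intro h
    exact ⟨hxy, Or.inl h⟩


lemma adj_iff' {x y : ZMod n} (h : x.val < y.val) :
    (GA' t k).Adj x y ↔
      ((y.val - x.val) % t = 1 % t ∧ y.val - x.val ≠ 1 ∧ y.val - x.val ≠ t * (k - 1) + 1) := by
  have hxy : x ≠ y := fun he => by rw [he] at h; omega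
  rw [adj_iff hxy, val_sub_of_lt h]

lemma upper_zero (ht : 1 ≤ t) (hk : 4 ≤ k) (S : Finset (ZMod n))
    (h0 : (0 : ZMod n) ∉ S)
    (hS : ∀ v ∈ S, ((GA' t k).neighborSet v ∩ ↑S).ncard = 1) : S.card ≤ 2 * t := by
  by_contra hcard
  push_neg at hcard
  have hex : ∀ v, v ∈ S → ∃ w, (GA' t k).neighborSet v ∩ ↑S = {w} :=
    fun v hv => Set.ncard_eq_one.mp (hS v hv)
  choose! f hf using hex
  have hmem : ∀ v ∈ S, (GA' t k).Adj v (f v) ∧ f v ∈ S := by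
    intro v hv
    have h1 : f v ∈ (GA' t k).neighborSet v ∩ ↑S := by rw [hf v hv]; rfl
    exact ⟨h1.1, h1.2⟩
  have huniq : ∀ v ∈ S, ∀ u, (GA' t k).Adj v u → u ∈ S → u = f v := by
    intro v hv u hadj hu
    have : u ∈ (GA' t k).neighborSet v ∩ ↑S := ⟨hadj, hu⟩
    rwa [hf v hv, Set.mem_singleton_iff] at this
  have hinv : ∀ v ∈ S, f (f v) = v :=
    fun v hv => (huniq (f v) (hmem v hv).2 v (hmem v hv).1.symm hv).symm
  have hfne : ∀ v ∈ S, f v ≠ v := fun v hv => (hmem v hv).1.ne'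
  -- pigeonhole on min-val classes mod t
  set L : ZMod n → ℕ := fun v => min v.val (f v).val with hL
  have hmaps : ∀ v ∈ S, L v % t ∈ Finset.range t :=
    fun v _ => Finset.mem_range.mpr (Nat.mod_lt _ ht)
  have hpig := Finset.exists_lt_card_fiber_of_mul_lt_card_of_maps_to hmaps
    (by rw [Finset.card_range]; omega : (Finset.range t).card * 2 < S.card)
  obtain ⟨c, -, hc⟩ := hpig
  rw [Finset.two_lt_card_iff] at hc
  obtain ⟨a, b, c', ha, hb, hc', hab, hac, hbc⟩ := hc
  rw [Finset.mem_filter] at ha hb hc'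
  -- same L implies same edge
  have hsame : ∀ u v, u ∈ S → v ∈ S → L u = L v → v = u ∨ v = f u := by
    intro u v hu hv he
    rcases min_choice u.val (f u).val with h1 | h1 <;>
      rcases min_choice v.val (f v).val with h2 | h2 <;>
      rw [hL] at he <;> simp only [h1, h2] at he
    · exact Or.inl (ZMod.val_injective _ he.symm)
    · have : u = f v := ZMod.val_injective _ he
      right; rw [this, hinv v hv]
    · right; exact (ZMod.val_injective _ he).symm
    · have : f u = f v := ZMod.val_injective _ he
      left
      have h4 := congrArg f this
      rw [hinv u hu, hinv v hv] at h4
      exact h4.symm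
  -- find two vertices with different L but same class
  have hkey : ∃ x y, x ∈ S ∧ y ∈ S ∧ L x < L y ∧ L x % t = L y % t := by
    have hd : ∃ x y, x ∈ S ∧ y ∈ S ∧ L x ≠ L y ∧ L x % t = L y % t := by
      by_cases h1 : L a = L b
      · by_cases h2 : L a = L c'
        · exfalso
          rcases hsame a b ha.1 hb.1 h1 with h | h
          · exact hab h.symm
          rcases hsame a c' ha.1 hc'.1 h2 with h' | h'
          · exact hac h'.symm
          · exact hbc (h.trans h'.symm)
        · exact ⟨a, c', ha.1, hc'.1, h2, by rw [ha.2, hc'.2]⟩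
      · exact ⟨a, b, ha.1, hb.1, h1, by rw [ha.2, hb.2]⟩
    obtain ⟨x, y, hx, hy, hne, hmod⟩ := hd
    rcases lt_or_gt_of_ne hne with h | h
    · exact ⟨x, y, hx, hy, h, hmod⟩
    · exact ⟨y, x, hy, hx, h, hmod.symm⟩
  obtain ⟨x, y, hx, hy, hlt, hmod⟩ := hkey
  -- extract sorted edges
  have hedge : ∀ z ∈ S, ∃ u, u ∈ S ∧ u.val = L z ∧ u.val < (f u).val := by
    intro z hz
    rcases le_total z.val (f z).val with h1 | h1
    · refine ⟨z, hz, (min_eq_left h1).symm, ?_⟩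
      have : (f z).val ≠ z.val := fun he => hfne z hz (ZMod.val_injective _ he)
      omega
    · refine ⟨f z, (hmem z hz).2, ?_, ?_⟩
      · rw [hL]; simp only []
        exact (min_eq_right h1).symm
      · rw [hinv z hz]
        have : (f z).val ≠ z.val := fun he => hfne z hz (ZMod.val_injective _ he)
        omega
  obtain ⟨u, hu, huL, huw⟩ := hedge x hx
  obtain ⟨u', hu', huL', huw'⟩ := hedge y hy
  set w := f u with hwdef
  set w' := f u' with hwdef'
  have hadj1 : (GA' t k).Adj u w := (hmem u hu).1
  have hadj2 : (GA' t k).Adj u' w' := (hmem u' hu').1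
  have hcond1 := (adj_iff' huw).mp hadj1
  have hcond2 := (adj_iff' huw').mp hadj2
  set d1 := w.val - u.val with hd1
  set d2 := w'.val - u'.val with hd2
  have hd1t : t + 1 ≤ d1 := ge_t_succ ht hcond1.1 hcond1.2.1 (by omega)
  have hd2t : t + 1 ≤ d2 := ge_t_succ ht hcond2.1 hcond2.2.1 (by omega)
  -- u.val < u'.val, difference divisible by t
  have huu' : u.val < u'.val := by rw [huL, huL']; exact hlt
  have hdvd : t ∣ u'.val - u.val := by
    have : u.val ≡ u'.val [MOD t] := by
      unfold Nat.ModEq; rw [huL, huL']; exact hmod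
    exact (Nat.modEq_iff_dvd' (le_of_lt huu')).mp this
  have hdu : t ≤ u'.val - u.val := Nat.le_of_dvd (by omega) hdvd
  -- the clash difference
  have hsplit : w'.val - u.val = d2 + (u'.val - u.val) := by omega
  have hmodstar : (w'.val - u.val) % t = 1 % t := by
    obtain ⟨m, hm⟩ := hdvd
    rw [hsplit, hm, Nat.add_mul_mod_self_left]
    exact hcond2.1
  have hupos : 1 ≤ u.val := by
    rcases Nat.eq_zero_or_pos u.val with h | h
    · exact absurd (ZMod.val_eq_zero u |>.mp h ▸ hu) h0
    · exact h
  have hwlt : w'.val < n := ZMod.val_lt w'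
  have h3t : 3 * t + 2 ≤ n := n_big ht hk
  have hadjstar : (GA' t k).Adj u w' := by
    rw [adj_iff' (by omega : u.val < w'.val)]
    exact ⟨hmodstar, by omega, by omega⟩
  have : w' = w := huniq u hu w' hadjstar (hmem u' hu').2
  -- but w ≠ w'
  have hune : u ≠ u' := fun he => by rw [he] at huu'; omega
  apply hune
  have h3 : f w' = f w := congrArg f this
  rw [hwdef', hwdef, hinv u' hu', hinv u hu] at h3
  exact h3.symm

lemma adj_shift (c : ZMod n) {a b : ZMod n} :
    (GA' t k).Adj (a + c) (b + c) ↔ (GA' t k).Adj a b := by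
  rw [GA', SimpleGraph.fromRel_adj, SimpleGraph.fromRel_adj]
  have h1 : b + c - (a + c) = b - a := by ring
  have h2 : a + c - (b + c) = a - b := by ring
  rw [h1, h2]
  constructor
  · rintro ⟨hne, h⟩
    exact ⟨fun he => hne (by rw [he]), h⟩
  · rintro ⟨hne, h⟩
    exact ⟨fun he => hne (add_right_cancel he), h⟩

lemma upper_general (ht : 1 ≤ t) (hk : 4 ≤ k) (S : Finset (ZMod n))
    (hS : ∀ v ∈ S, ((GA' t k).neighborSet v ∩ ↑S).ncard = 1) : S.card ≤ 2 * t := by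
  have h3t : 3 * t + 2 ≤ n := n_big ht hk
  by_cases hz : ∃ z : ZMod n, z ∉ S
  · obtain ⟨z, hzS⟩ := hz
    set S' : Finset (ZMod n) := S.image (fun v => v - z) with hS'
    have hinj : Function.Injective (fun v : ZMod n => v - z) := fun a b h => by
      simpa using congrArg (· + z) h
    have h0 : (0 : ZMod n) ∉ S' := by
      rw [hS', Finset.mem_image]
      rintro ⟨v, hv, hvz⟩
      have : v = z := by
        have := congrArg (· + z) hvz
        simpa using this
      rw [this] at hv; exact hzS hv
    have hvalid : ∀ v ∈ S', ((GA' t k).neighborSet v ∩ ↑S').ncard = 1 := by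
      intro v' hv'
      rw [hS', Finset.mem_image] at hv'
      obtain ⟨v, hv, rfl⟩ := hv'
      have hset : (GA' t k).neighborSet (v - z) ∩ ↑S' =
          (fun w => w - z) '' ((GA' t k).neighborSet v ∩ ↑S) := by
        ext u
        simp only [Set.mem_inter_iff, SimpleGraph.mem_neighborSet, Set.mem_image,
          hS', Finset.coe_image, Finset.mem_coe]
        constructor
        · rintro ⟨hadj, ⟨w, hw, rfl⟩⟩
          refine ⟨w, ⟨?_, hw⟩, rfl⟩
          have : (GA' t k).Adj (v - z + z) (w - z + z) ↔ (GA' t k).Adj (v - z) (w - z) :=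
            adj_shift z
          rw [sub_add_cancel, sub_add_cancel] at this
          exact this.mpr hadj
        · rintro ⟨w, ⟨hadj, hw⟩, rfl⟩
          refine ⟨?_, ⟨w, hw, rfl⟩⟩
          have : (GA' t k).Adj (v - z + z) (w - z + z) ↔ (GA' t k).Adj (v - z) (w - z) :=
            adj_shift z
          rw [sub_add_cancel, sub_add_cancel] at this
          exact this.mp hadj
      rw [hset, Set.ncard_image_of_injective _ hinj]
      exact hS v hv
    have := upper_zero ht hk S' h0 hvalid
    rwa [hS', Finset.card_image_of_injective _ hinj] at this
  · push_neg at hz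
    exfalso
    have h0S : (0 : ZMod n) ∈ S := hz 0
    have hn1 := hS 0 h0S
    set a : ZMod n := ((t + 1 : ℕ) : ZMod n) with hadef
    set b : ZMod n := ((2 * t + 1 : ℕ) : ZMod n) with hbdef
    have hav : a.val = t + 1 := ZMod.val_cast_of_lt (by omega)
    have hbv : b.val = 2 * t + 1 := ZMod.val_cast_of_lt (by omega)
    have hane : a ≠ 0 := by
      intro h; rw [h] at hav; simp [ZMod.val_zero] at hav
    have hbne : b ≠ 0 := by
      intro h; rw [h] at hbv; simp [ZMod.val_zero] at hbv
    have hsub : ∀ x : ZMod n, x - 0 = x := fun x => by ring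
    have hadja : (GA' t k).Adj 0 a := by
      rw [adj_iff (fun h => hane h.symm), hsub, hav]
      refine ⟨?_, by omega, by omega⟩
      have : (t + 1) % t = 1 % t := Nat.add_mod_left t 1
      exact this
    have hadjb : (GA' t k).Adj 0 b := by
      rw [adj_iff (fun h => hbne h.symm), hsub, hbv]
      refine ⟨?_, by omega, by omega⟩
      have : (2 * t + 1) % t = 1 % t := by
        have : 2 * t + 1 = t + (t + 1) := by ring
        rw [this, Nat.add_mod_left, Nat.add_mod_left]
      exact this
    have hin : ∀ x, (GA' t k).Adj 0 x → x ∈ (GA' t k).neighborSet 0 ∩ ↑S :=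
      fun x hx => ⟨hx, hz x⟩
    obtain ⟨w, hw⟩ := Set.ncard_eq_one.mp hn1
    have ha' : a = w := by have := hin a hadja; rwa [hw, Set.mem_singleton_iff] at this
    have hb' : b = w := by have := hin b hadjb; rwa [hw, Set.mem_singleton_iff] at this
    have : a = b := ha'.trans hb'.symm
    have : a.val = b.val := congrArg ZMod.val this
    omega

lemma lower_bound (ht : 1 ≤ t) (hk : 4 ≤ k) :
    ∃ S : Finset (ZMod n), S.card = 2 * t ∧
      ∀ v ∈ S, ((GA' t k).neighborSet v ∩ ↑S).ncard = 1 := by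
  have h3t : 3 * t + 2 ≤ n := n_big ht hk
  classical
  set I : Finset ℕ := Finset.range t ∪ Finset.Ico (t + 1) (2 * t + 1) with hIdef
  have hmemI : ∀ i, i ∈ I ↔ (i < t ∨ (t + 1 ≤ i ∧ i < 2 * t + 1)) := by
    intro i
    rw [hIdef, Finset.mem_union, Finset.mem_range, Finset.mem_Ico]
  have hIb : ∀ i ∈ I, i ≤ 2 * t := by
    intro i hi; rw [hmemI] at hi; omega
  have hval : ∀ i ∈ I, ((i : ZMod n)).val = i := by
    intro i hi
    exact ZMod.val_cast_of_lt (by have := hIb i hi; omega)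
  set pa : ℕ → ℕ := fun i => if i < t then i + t + 1 else i - (t + 1) with hpa
  have hpa1 : ∀ i, i < t → pa i = i + t + 1 := by intro i h; simp [hpa, h]
  have hpa2 : ∀ i, ¬ i < t → pa i = i - (t + 1) := by intro i h; simp [hpa, h]
  have hpmem : ∀ i ∈ I, pa i ∈ I ∧ pa (pa i) = i ∧ pa i ≠ i := by
    intro i hi
    rw [hmemI] at hi
    rcases hi with h | h
    · rw [hpa1 i h, hmemI, hpa2 _ (by omega)]
      exact ⟨Or.inr (by omega), by omega, by omega⟩
    · rw [hpa2 i (by omega), hmemI, hpa1 _ (by omega)]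
      exact ⟨Or.inl (by omega), by omega, by omega⟩
  have hadjnat : ∀ i ∈ I, ∀ j ∈ I, i < j →
      ((GA' t k).Adj (i : ZMod n) (j : ZMod n) ↔ j = i + (t + 1)) := by
    intro i hi j hj hij
    have hvi := hval i hi
    have hvj := hval j hj
    rw [adj_iff' (by rw [hvi, hvj]; exact hij), hvi, hvj]
    have hbi := hIb i hi
    have hbj := hIb j hj
    constructor
    · rintro ⟨hm, h1, h2⟩
      have hd1 : t + 1 ≤ j - i := ge_t_succ ht hm h1 (by omega)
      rcases Nat.eq_or_lt_of_le ht with h' | h'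
      · omega
      · have h1t : 1 % t = 1 := Nat.mod_eq_of_lt h'
        rw [h1t] at hm
        have hsub : (j - i) % t = (j - i - t) % t := Nat.mod_eq_sub_mod (by omega)
        rw [hsub] at hm
        by_cases hcase : j - i - t < t
        · rw [Nat.mod_eq_of_lt hcase] at hm
          omega
        · have he : j - i - t = t := by omega
          rw [he, Nat.mod_self] at hm
          omega
    · rintro rfl
      refine ⟨?_, by omega, by omega⟩
      rw [show (i + (t + 1)) - i = 1 + t from by omega, Nat.add_mod_right]
  have hadjpart : ∀ i ∈ I, ∀ j ∈ I, i ≠ j →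
      ((GA' t k).Adj (i : ZMod n) (j : ZMod n) ↔ j = pa i) := by
    intro i hi j hj hij
    have hbi := hIb i hi
    have hbj := hIb j hj
    have hIi := (hmemI i).mp hi
    rcases lt_or_gt_of_ne hij with h | h
    · rw [hadjnat i hi j hj h]
      rcases hIi with h' | h'
      · rw [hpa1 i h']; omega
      · rw [hpa2 i (by omega)]; omega
    · rw [SimpleGraph.adj_comm, hadjnat j hj i hi h]
      rcases hIi with h' | h'
      · rw [hpa1 i h']; omega
      · rw [hpa2 i (by omega)]; omega
  have hinjOn : Set.InjOn (fun i : ℕ => (i : ZMod n)) ↑I := by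
    intro x hx y hy hxy
    have : ((x : ZMod n)).val = ((y : ZMod n)).val := congrArg ZMod.val hxy
    rwa [hval x hx, hval y hy] at this
  refine ⟨Finset.image (fun i : ℕ => (i : ZMod n)) I, ?_, ?_⟩
  · rw [Finset.card_image_of_injOn hinjOn, hIdef,
      Finset.card_union_of_disjoint, Finset.card_range, Nat.card_Ico]
    · omega
    · rw [Finset.disjoint_left]
      intro x hx hx'
      rw [Finset.mem_range] at hx
      rw [Finset.mem_Ico] at hx'
      omega
  · intro v hv
    rw [Finset.mem_image] at hv
    obtain ⟨i, hi, rfl⟩ := hv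
    have hset : (GA' t k).neighborSet (i : ZMod n)
          ∩ ↑(Finset.image (fun i : ℕ => (i : ZMod n)) I)
        = {((pa i : ℕ) : ZMod n)} := by
      ext u
      simp only [Set.mem_inter_iff, SimpleGraph.mem_neighborSet, Finset.coe_image,
        Set.mem_image, Finset.mem_coe, Set.mem_singleton_iff]
      constructor
      · rintro ⟨hadj, ⟨j, hj, rfl⟩⟩
        have hij : i ≠ j := by
          intro h
          subst h
          exact (GA' t k).irrefl hadj
        rw [hadjpart i hi j hj hij] at hadj
        rw [hadj]
      · rintro rfl
        obtain ⟨hp1, _, hp3⟩ := hpmem i hi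
        exact ⟨(hadjpart i hi (pa i) hp1 (fun h => hp3 h.symm)).mpr rfl, ⟨pa i, hp1, rfl⟩⟩
    rw [hset, Set.ncard_singleton]

end

/-- For `k ≥ 4`, the induced matching number of `GA(t,k)'` equals `t`: there is a
vertex set of size `2t` inducing a `1`-regular subgraph (i.e. `t` disjoint edges),
and every vertex set inducing a `1`-regular subgraph has size at most `2t`. -/
theorem stmt_10 (t k : ℕ) (ht : 1 ≤ t) (hk : 4 ≤ k) :
    (∃ S : Finset (ZMod (t * (k - 1) + 2)), S.card = 2 * t ∧
      ∀ v ∈ S, ((GA' t k).neighborSet v ∩ ↑S).ncard = 1) ∧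
    (∀ S : Finset (ZMod (t * (k - 1) + 2)),
      (∀ v ∈ S, ((GA' t k).neighborSet v ∩ ↑S).ncard = 1) → S.card ≤ 2 * t) := by
  exact ⟨lower_bound ht hk, fun S hS => upper_general ht hk S hS⟩
end

section
/- For t ≥ 1 and k ≥ 4, the number of induced matchings of size t in GA(t,k)' equals (n/2)·(t(k-3)+1), where n = t(k-1)+2. -/
def nadj (t u v : ℕ) : Prop :=
  u ≠ v ∧ (Nat.dist u v) % t = 1 % t ∧ Nat.dist u v ≠ 1

lemma nadj_symm {t u v : ℕ} (h : nadj t u v) : nadj t v u := by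
  obtain ⟨h1, h2, h3⟩ := h
  exact ⟨h1.symm, by rwa [Nat.dist_comm], by rwa [Nat.dist_comm]⟩

lemma nadj_dist {u v : ℕ} (h : u ≤ v) : Nat.dist u v = v - u := by
  simp [Nat.dist, Nat.sub_eq_zero_of_le h]

/-- distances ≤ t that are ≡ 1 mod t and ≠ 1 don't exist -/
lemma small_dist {t : ℕ} (ht : 1 ≤ t) {d : ℕ} (h : d % t = 1 % t) (h1 : d ≠ 1)
    (h0 : d ≠ 0) (hle : d ≤ t) : False := by
  rcases eq_or_lt_of_le ht with h' | h'
  · omega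
  · rw [Nat.mod_eq_of_lt h'] at h
    rcases eq_or_lt_of_le hle with rfl | hlt
    · rw [Nat.mod_self] at h; omega
    · rw [Nat.mod_eq_of_lt hlt] at h; omega

section Prop1
variable {t : ℕ} {T : Finset ℕ}

/-- Claim 1: no t+1 consecutive integers all in T -/
lemma claim1 (ht : 1 ≤ t) (hT : T.card = 2 * t)
    (hM : ∀ v ∈ T, ∃! u, u ∈ T ∧ nadj t v u) (u : ℕ)
    (hall : ∀ i ≤ t, u + i ∈ T) : False := by
  classical
  set I : Finset ℕ := Finset.Icc u (u + t) with hI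
  have hIsub : I ⊆ T := by
    intro x hx
    rw [hI, Finset.mem_Icc] at hx
    have : x = u + (x - u) := by omega
    rw [this]; exact hall _ (by omega)
  have hIcard : I.card = t + 1 := by rw [hI, Nat.card_Icc]; omega
  have key : ∀ x ∈ I, ∃ w, (w ∈ T \ I) ∧ nadj t x w := by
    intro x hx
    obtain ⟨w, ⟨hwT, hwadj⟩, _⟩ := hM x (hIsub hx)
    refine ⟨w, ?_, hwadj⟩
    rw [Finset.mem_sdiff]
    refine ⟨hwT, fun hwI => ?_⟩
    rw [hI, Finset.mem_Icc] at hx hwI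
    obtain ⟨hne, hmod, hd1⟩ := hwadj
    have hdle : Nat.dist x w ≤ t := by rw [Nat.dist]; omega
    have hdpos : Nat.dist x w ≠ 0 := fun h0 => hne (Nat.eq_of_dist_eq_zero h0)
    exact small_dist ht hmod hd1 hdpos hdle
  choose! f hf1 hf2 using key
  have hinj : Set.InjOn f (I : Set ℕ) := by
    intro x hx x' hx' hfe
    rw [Finset.mem_coe] at hx hx'
    have h1 := hf2 x hx
    have h2 := hf2 x' hx'
    rw [hfe] at h1
    obtain ⟨p, _, hpu⟩ := hM (f x') ((Finset.mem_sdiff.mp (hf1 x' hx')).1)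
    have e1 := hpu x ⟨hIsub hx, nadj_symm h1⟩
    have e2 := hpu x' ⟨hIsub hx', nadj_symm h2⟩
    rw [e1, e2]
  have hcard := Finset.card_le_card_of_injOn f (fun x hx => hf1 x hx) hinj
  have : (T \ I).card = 2 * t - (t + 1) := by
    rw [Finset.card_sdiff_of_subset hIsub, hT, hIcard]
  omega

end Prop1

section Beta
variable (T : Finset ℕ)

def beta (v : ℕ) : ℕ := v - (T.filter (· < v)).card

lemma card_filter_lt_le (v : ℕ) : (T.filter (· < v)).card ≤ v := by
  calc (T.filter (· < v)).card ≤ (Finset.range v).card := by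
        apply Finset.card_le_card
        intro x hx
        rw [Finset.mem_filter] at hx
        rw [Finset.mem_range]; exact hx.2
    _ = v := Finset.card_range v

lemma card_filter_split {u v : ℕ} (h : u ≤ v) :
    (T.filter (· < v)).card
      = (T.filter (· < u)).card + (T.filter (fun x => u ≤ x ∧ x < v)).card := by
  classical
  rw [← Finset.card_union_of_disjoint]
  · congr 1
    ext x
    simp only [Finset.mem_union, Finset.mem_filter]
    constructor
    · rintro ⟨hx, hlt⟩
      rcases Nat.lt_or_ge x u with h' | h'
      · exact Or.inl ⟨hx, h'⟩
      · exact Or.inr ⟨hx, h', hlt⟩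
    · rintro (⟨hx, h'⟩ | ⟨hx, h1, h2⟩)
      · exact ⟨hx, lt_of_lt_of_le h' h⟩
      · exact ⟨hx, h2⟩
  · rw [Finset.disjoint_filter]
    intro x _ hlt ⟨hge, _⟩
    omega

lemma card_mid_le (u v : ℕ) : (T.filter (fun x => u ≤ x ∧ x < v)).card ≤ v - u := by
  calc (T.filter (fun x => u ≤ x ∧ x < v)).card ≤ (Finset.Ico u v).card := by
        apply Finset.card_le_card
        intro x hx
        rw [Finset.mem_filter] at hx
        rw [Finset.mem_Ico]; exact hx.2
    _ = v - u := Nat.card_Ico u v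

lemma beta_mono {u v : ℕ} (h : u ≤ v) : beta T u ≤ beta T v := by
  have h1 := card_filter_split T h
  have h2 := card_mid_le T u v
  have h3 := card_filter_lt_le T u
  unfold beta
  omega

lemma beta_eq_imp_run {u v : ℕ} (huv : u ≤ v) (h : beta T u = beta T v) :
    Finset.Ico u v ⊆ T := by
  classical
  have h1 := card_filter_split T huv
  have h2 := card_mid_le T u v
  have h3 := card_filter_lt_le T u
  have hceq : (T.filter (fun x => u ≤ x ∧ x < v)).card = v - u := by
    unfold beta at h; omega
  have hsub : T.filter (fun x => u ≤ x ∧ x < v) ⊆ Finset.Ico u v := by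
    intro x hx
    rw [Finset.mem_filter] at hx
    rw [Finset.mem_Ico]; exact hx.2
  have := Finset.eq_of_subset_of_card_le hsub (by rw [hceq, Nat.card_Ico])
  intro x hx
  rw [← this, Finset.mem_filter] at hx
  exact hx.1

lemma beta_succ {u : ℕ} (hu : u ∈ T) : beta T (u + 1) = beta T u := by
  classical
  have h1 := card_filter_split T (Nat.le_succ u)
  have h3 := card_filter_lt_le T u
  have : T.filter (fun x => u ≤ x ∧ x < u + 1) = {u} := by
    ext x
    rw [Finset.mem_filter, Finset.mem_singleton]
    constructor
    · rintro ⟨_, h1, h2⟩; omega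
    · rintro rfl; exact ⟨hu, Nat.le_refl _, Nat.lt_succ_self _⟩
  rw [this, Finset.card_singleton] at h1
  simp only [beta]
  rw [h1]
  omega

lemma beta_lt_of_gap {u v w : ℕ} (huv : u ≤ w) (hwv : w < v) (hw : w ∉ T) :
    beta T u < beta T v := by
  classical
  have h1 := card_filter_split T (le_of_lt (lt_of_le_of_lt huv hwv) : u ≤ v)
  have h2 := card_filter_lt_le T u
  have hlt : (T.filter (fun x => u ≤ x ∧ x < v)).card < v - u := by
    have hss : T.filter (fun x => u ≤ x ∧ x < v) ⊂ Finset.Ico u v := by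
      refine ⟨fun x hx => ?_, fun hsup => ?_⟩
      · rw [Finset.mem_filter] at hx
        rw [Finset.mem_Ico]; exact hx.2
      · have hwmem := hsup (Finset.mem_Ico.mpr ⟨huv, hwv⟩)
        rw [Finset.mem_filter] at hwmem
        exact hw hwmem.1
    calc (T.filter (fun x => u ≤ x ∧ x < v)).card < (Finset.Ico u v).card :=
          Finset.card_lt_card hss
      _ = v - u := Nat.card_Ico u v
  unfold beta
  omega

end Beta

-- mod helper lemmas
lemma mod_iff_res {t u v : ℕ} (h : u ≤ v) :
    (v - u) % t = 1 % t ↔ v % t = (u + 1) % t := by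
  constructor
  · intro hm
    have h2 : (v - u) + u ≡ 1 + u [MOD t] := Nat.ModEq.add_right u hm
    rw [Nat.sub_add_cancel h] at h2
    simpa [Nat.ModEq, Nat.add_comm] using h2
  · intro hm
    have h2 : v ≡ u + 1 [MOD t] := hm
    have h3 : (v - u) + u ≡ 1 + u [MOD t] := by
      rw [Nat.sub_add_cancel h, Nat.add_comm 1 u]; exact h2
    exact Nat.ModEq.add_right_cancel' u h3

lemma mod_pred {t σ ρ : ℕ} (hσ : σ < t) (hρ : ρ < t) (h : (ρ + 1) % t = σ) :
    ρ = (σ + t - 1) % t := by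
  rcases Nat.lt_or_ge (ρ + 1) t with h' | h'
  · rw [Nat.mod_eq_of_lt h'] at h
    subst h
    rw [show ρ + 1 + t - 1 = ρ + t by omega, Nat.add_mod_right, Nat.mod_eq_of_lt hρ]
  · have ht : ρ + 1 = t := by omega
    have : σ = 0 := by rw [← h, ht, Nat.mod_self]
    subst this
    rw [show 0 + t - 1 = ρ by omega, Nat.mod_eq_of_lt hρ]

lemma mod_succ_pred {t σ : ℕ} (hσ : σ < t) : (((σ + 1) % t) + t - 1) % t = σ := by
  have ht : 1 ≤ t := by omega
  rcases Nat.lt_or_ge (σ + 1) t with h' | h'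
  · rw [Nat.mod_eq_of_lt h', show σ + 1 + t - 1 = σ + t by omega,
      Nat.add_mod_right, Nat.mod_eq_of_lt hσ]
  · have h1 : σ + 1 = t := by omega
    have h2 : σ = t - 1 := by omega
    rw [show σ + 1 = t from h1, Nat.mod_self, show 0 + t - 1 = t - 1 by omega,
      Nat.mod_eq_of_lt (by omega), h2]

lemma mod_add_one {t x σ : ℕ} (h : x % t = σ) : (x + 1) % t = (σ + 1) % t := by
  conv_lhs => rw [Nat.add_mod, h]
  rw [Nat.add_mod_mod]

lemma cyc_const {t : ℕ} (ht : 1 ≤ t) (h : ℕ → ℕ)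
    (hstep : ∀ σ < t, h ((σ + 1) % t) ≤ h σ) :
    ∀ a < t, ∀ b < t, h a ≤ h b := by
  have key : ∀ j, ∀ σ < t, h ((σ + j) % t) ≤ h σ := by
    intro j
    induction j with
    | zero => intro σ hσ; rw [Nat.add_zero, Nat.mod_eq_of_lt hσ]
    | succ j ih =>
      intro σ hσ
      have h1 : (σ + (j + 1)) % t = (((σ + j) % t) + 1) % t := by
        rw [Nat.mod_add_mod, ← Nat.add_assoc]
      rw [h1]
      exact le_trans (hstep _ (Nat.mod_lt _ (by omega))) (ih σ hσ)
  intro a ha b hb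
  have : a = (b + (a + t - b)) % t := by
    rw [show b + (a + t - b) = a + t by omega, Nat.add_mod_right, Nat.mod_eq_of_lt ha]
  rw [this]
  exact key _ b hb

theorem prop_main (t : ℕ) (ht : 1 ≤ t) (T : Finset ℕ) (hT : T.card = 2 * t)
    (h0 : 0 ∈ T) (hM : ∀ v ∈ T, ∃! u, u ∈ T ∧ nadj t v u) :
    ∃ e, t + 1 ≤ e ∧ T = Finset.range t ∪ Finset.Ico e (e + t) := by
  classical
  -- partner uniqueness
  have uniq : ∀ w a b, w ∈ T → a ∈ T → b ∈ T → nadj t w a → nadj t w b → a = b := by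
    intro w a b hw ha hb h1 h2
    obtain ⟨p, _, hp⟩ := hM w hw
    rw [hp a ⟨ha, h1⟩, hp b ⟨hb, h2⟩]
  -- F1 : adjacency implies strictly increasing beta
  have F1 : ∀ u v, u ∈ T → v ∈ T → u < v → nadj t u v → beta T u < beta T v := by
    intro u v hu hv hlt hadj
    obtain ⟨hne, hmod, hd1⟩ := hadj
    rw [nadj_dist (le_of_lt hlt)] at hmod hd1
    by_contra hle
    have heq : beta T u = beta T v :=
      le_antisymm (beta_mono T (le_of_lt hlt)) (by omega)
    have hrun := beta_eq_imp_run T (le_of_lt hlt) heq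
    rcases Nat.lt_or_ge (v - u) (t + 1) with hsm | hbig
    · exact small_dist ht hmod hd1 (by omega) (by omega)
    · apply claim1 ht hT hM u
      intro i hi
      rcases Nat.lt_or_ge i (v - u) with h' | h'
      · exact hrun (Finset.mem_Ico.mpr ⟨by omega, by omega⟩)
      · have : u + i = v := by omega
        rw [this]; exact hv
  -- F2 : cross-run residue-successors are adjacent
  have F2 : ∀ u v, u ∈ T → v ∈ T → u < v → beta T u ≠ beta T v →
      v % t = (u + 1) % t → nadj t u v := by
    intro u v hu hv hlt hbne hres
    have hd1 : v - u ≠ 1 := by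
      intro h1
      apply hbne
      have := beta_succ T hu
      rw [show v = u + 1 by omega]
      omega
    refine ⟨by omega, ?_, ?_⟩
    · rw [nadj_dist (le_of_lt hlt)]
      exact (mod_iff_res (le_of_lt hlt)).mpr hres
    · rw [nadj_dist (le_of_lt hlt)]
      exact hd1
  -- fibers
  have hfibsum : ∑ σ ∈ Finset.range t, (T.filter (fun v => v % t = σ)).card = 2 * t := by
    rw [← Finset.card_eq_sum_card_fiberwise (fun x hx => Finset.mem_range.mpr (Nat.mod_lt x ht)), hT]
  have claim2 : ∀ σ, (T.filter (fun v => v % t = σ)).card ≤ 2 := by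
    intro σ
    by_contra h3
    push_neg at h3
    set s := T.filter (fun v => v % t = σ) with hs
    have hne : s.Nonempty := Finset.card_pos.mp (by omega)
    have hmin := s.min'_mem hne
    have hmax := s.max'_mem hne
    have hcard3 : 3 ≤ s.card := h3
    have hmm : s.min' hne < s.max' hne := Finset.min'_lt_max'_of_card s (by omega)
    obtain ⟨b, hb⟩ : ∃ b, b ∈ s \ {s.min' hne, s.max' hne} := by
      have : (s \ {s.min' hne, s.max' hne}).Nonempty := by
        rw [← Finset.card_pos]
        have := Finset.card_sdiff_of_subset (show {s.min' hne, s.max' hne} ⊆ s by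
          intro x hx
          rcases Finset.mem_insert.mp hx with rfl | hx
          · exact hmin
          · rw [Finset.mem_singleton.mp hx]; exact hmax)
        rw [this, Finset.card_insert_of_notMem (by simp [ne_of_lt hmm]),
          Finset.card_singleton]
        omega
      exact this
    rw [Finset.mem_sdiff, Finset.mem_insert, Finset.mem_singleton] at hb
    obtain ⟨hbs, hbne⟩ := hb
    push_neg at hbne
    set v1 := s.min' hne
    set v3 := s.max' hne
    have h12 : v1 < b := lt_of_le_of_ne (s.min'_le b hbs) (Ne.symm hbne.1)
    have h23 : b < v3 := lt_of_le_of_ne (s.le_max' b hbs) hbne.2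
    have hv1T : v1 ∈ T := (Finset.mem_filter.mp hmin).1
    have hv2T : b ∈ T := (Finset.mem_filter.mp hbs).1
    have hv3T : v3 ∈ T := (Finset.mem_filter.mp hmax).1
    have hv1r : v1 % t = σ := (Finset.mem_filter.mp hmin).2
    have hv2r : b % t = σ := (Finset.mem_filter.mp hbs).2
    have hv3r : v3 % t = σ := (Finset.mem_filter.mp hmax).2
    obtain ⟨w, ⟨hwT, hwadj⟩, _⟩ := hM b hv2T
    rcases lt_trichotomy b w with hbw | hbw | hbw
    · -- w above b
      have hres : w % t = (b + 1) % t := by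
        have := hwadj.2.1
        rw [nadj_dist (le_of_lt hbw)] at this
        exact (mod_iff_res (le_of_lt hbw)).mp this
      have hb2 : beta T b < beta T w := F1 b w hv2T hwT hbw hwadj
      have hb1 : beta T v1 ≤ beta T b := beta_mono T (le_of_lt h12)
      have hadj1 : nadj t v1 w := by
        apply F2 v1 w hv1T hwT (lt_trans h12 hbw) (by omega)
        rw [hres, mod_add_one hv2r, mod_add_one hv1r]
      exact absurd (uniq w v1 b hwT hv1T hv2T (nadj_symm hadj1) (nadj_symm hwadj))
        (by omega)
    · exact hwadj.1 hbw
    · -- w below b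
      have hres : b % t = (w + 1) % t := by
        have := hwadj.2.1
        rw [Nat.dist_comm, nadj_dist (le_of_lt hbw)] at this
        exact (mod_iff_res (le_of_lt hbw)).mp this
      have hb2 : beta T w < beta T b := F1 w b hwT hv2T hbw (nadj_symm hwadj)
      have hb3 : beta T b ≤ beta T v3 := beta_mono T (le_of_lt h23)
      have hadj3 : nadj t w v3 := by
        apply F2 w v3 hwT hv3T (lt_trans hbw h23) (by omega)
        rw [← hres, hv3r, ← hv2r]
      exact absurd (uniq w b v3 hwT hv2T hv3T (nadj_symm hwadj) hadj3) (by omega)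
  have hfib2 : ∀ σ ∈ Finset.range t, (T.filter (fun v => v % t = σ)).card = 2 := by
    by_contra hcon
    push_neg at hcon
    obtain ⟨σ0, hσ0, hσ0ne⟩ := hcon
    have hlt : ∑ σ ∈ Finset.range t, (T.filter (fun v => v % t = σ)).card
        < ∑ σ ∈ Finset.range t, 2 := by
      apply Finset.sum_lt_sum (fun σ _ => claim2 σ)
      exact ⟨σ0, hσ0, lt_of_le_of_ne (claim2 σ0) hσ0ne⟩
    rw [Finset.sum_const, Finset.card_range, smul_eq_mul, hfibsum] at hlt
    omega
  -- extract the two occurrences of each residue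
  have hxy : ∀ σ ∈ Finset.range t, ∃ x y, x < y ∧ x ∈ T ∧ y ∈ T ∧ x % t = σ ∧ y % t = σ ∧
      (∀ v ∈ T, v % t = σ → v = x ∨ v = y) := by
    intro σ hσ
    obtain ⟨a, b, hab, hs⟩ := Finset.card_eq_two.mp (hfib2 σ hσ)
    have ha : a ∈ T.filter (fun v => v % t = σ) := by rw [hs]; simp
    have hb : b ∈ T.filter (fun v => v % t = σ) := by rw [hs]; simp
    rw [Finset.mem_filter] at ha hb
    have hcov : ∀ v ∈ T, v % t = σ → v = a ∨ v = b := by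
      intro v hv hvr
      have : v ∈ T.filter (fun v => v % t = σ) := Finset.mem_filter.mpr ⟨hv, hvr⟩
      rw [hs, Finset.mem_insert, Finset.mem_singleton] at this
      exact this
    rcases Nat.lt_or_ge a b with h' | h'
    · exact ⟨a, b, h', ha.1, hb.1, ha.2, hb.2, hcov⟩
    · refine ⟨b, a, by omega, hb.1, ha.1, hb.2, ha.2, fun v hv hvr => (hcov v hv hvr).symm⟩
  choose! xs ys hlt' hxT hyT hxr hyr hcov using hxy
  -- any T-neighbor of the upper occurrence is below it
  have pdown : ∀ σ, σ < t → ∀ w, w ∈ T → nadj t (ys σ) w → w < ys σ := by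
    intro σ hσ w hwT hwadj
    have hσ' : σ ∈ Finset.range t := Finset.mem_range.mpr hσ
    rcases lt_trichotomy w (ys σ) with h | h | h
    · exact h
    · exact absurd h.symm hwadj.1
    · exfalso
      have hres : w % t = (ys σ + 1) % t := by
        have h2 := hwadj.2.1
        rw [nadj_dist (le_of_lt h)] at h2
        exact (mod_iff_res (le_of_lt h)).mp h2
      have hxlt : xs σ < ys σ := hlt' σ hσ'
      have hb : beta T (xs σ) < beta T w :=
        lt_of_le_of_lt (beta_mono T hxlt.le) (F1 (ys σ) w (hyT σ hσ') hwT h hwadj)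
      have hadj : nadj t (xs σ) w := by
        apply F2 (xs σ) w (hxT σ hσ') hwT (lt_trans hxlt h) (by omega)
        rw [hres, mod_add_one (hyr σ hσ'), mod_add_one (hxr σ hσ')]
      exact absurd (uniq w (xs σ) (ys σ) hwT (hxT σ hσ') (hyT σ hσ')
        (nadj_symm hadj) (nadj_symm hwadj)) (ne_of_lt hxlt)
  -- the partner of `ys σ` is `xs ((σ+t-1)%t)`, with the chain inequality for xs
  have down : ∀ σ, σ < t → nadj t (ys σ) (xs ((σ + t - 1) % t)) ∧
      beta T (xs σ) ≤ beta T (xs ((σ + t - 1) % t)) := by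
    intro σ hσ
    have hσ' : σ ∈ Finset.range t := Finset.mem_range.mpr hσ
    obtain ⟨w, ⟨hwT, hwadj⟩, _⟩ := hM (ys σ) (hyT σ hσ')
    have hwlt : w < ys σ := pdown σ hσ w hwT hwadj
    have hres : ys σ % t = (w + 1) % t := by
      have h2 := hwadj.2.1
      rw [Nat.dist_comm, nadj_dist (le_of_lt hwlt)] at h2
      exact (mod_iff_res (le_of_lt hwlt)).mp h2
    have hwr : (w % t + 1) % t = σ := by
      rw [← mod_add_one (rfl : w % t = w % t), ← hres, hyr σ hσ']
    have hρ : w % t = (σ + t - 1) % t := mod_pred hσ (Nat.mod_lt _ (by omega)) hwr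
    set τ := (σ + t - 1) % t with hτdef
    have hτ : τ < t := Nat.mod_lt _ (by omega)
    have hτ' : τ ∈ Finset.range t := Finset.mem_range.mpr hτ
    have hwcov := hcov τ hτ' w hwT hρ
    have hwxs : w = xs τ := by
      rcases hwcov with h | h
      · exact h
      · exfalso
        have h2 : ys σ < w := by
          rw [h]
          exact pdown τ hτ (ys σ) (hyT σ hσ') (nadj_symm (h ▸ hwadj))
        omega
    subst hwxs
    refine ⟨hwadj, ?_⟩
    by_contra hble
    push_neg at hble
    have hxlt2 : xs τ < xs σ := by
      by_contra hge
      push_neg at hge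
      exact absurd (beta_mono T hge) (by omega)
    have hadj2 : nadj t (xs τ) (xs σ) := by
      apply F2 (xs τ) (xs σ) (hxT τ hτ') (hxT σ hσ') hxlt2 (by omega)
      rw [hρ] at hwr
      rw [hxr σ hσ', mod_add_one hρ]
      exact hwr.symm
    exact absurd (uniq (xs τ) (xs σ) (ys σ) (hxT τ hτ') (hxT σ hσ') (hyT σ hσ')
      hadj2 (nadj_symm hwadj)) (ne_of_lt (hlt' σ hσ'))
  -- beta is constant on the xs family and on the ys family
  have chainx : ∀ σ < t, beta T (xs ((σ + 1) % t)) ≤ beta T (xs σ) := by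
    intro σ hσ
    have h1 := (down ((σ + 1) % t) (Nat.mod_lt _ (by omega))).2
    rwa [mod_succ_pred hσ] at h1
  have chainy : ∀ σ < t, beta T (ys ((σ + 1) % t)) ≤ beta T (ys σ) := by
    intro σ hσ
    by_contra hcon
    push_neg at hcon
    set σ' := (σ + 1) % t with hσ'def
    have hσ't : σ' < t := Nat.mod_lt _ (by omega)
    have hσ'' : σ' ∈ Finset.range t := Finset.mem_range.mpr hσ't
    have hσ' : σ ∈ Finset.range t := Finset.mem_range.mpr hσ
    have hylt : ys σ < ys σ' := by
      by_contra hge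
      push_neg at hge
      exact absurd (beta_mono T hge) (by omega)
    have hadj : nadj t (ys σ) (ys σ') := by
      apply F2 (ys σ) (ys σ') (hyT σ hσ') (hyT σ' hσ'') hylt (by omega)
      rw [hyr σ' hσ'', mod_add_one (hyr σ hσ')]
    have hd := (down σ' hσ't).1
    rw [mod_succ_pred hσ] at hd
    exact absurd (uniq (ys σ') (ys σ) (xs σ) (hyT σ' hσ'') (hyT σ hσ') (hxT σ hσ')
      (nadj_symm hadj) hd) (fun h => (ne_of_lt (hlt' σ hσ')) h.symm)
  have hbx : ∀ a < t, ∀ b < t, beta T (xs a) = beta T (xs b) := by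
    intro a ha b hb
    exact le_antisymm (cyc_const ht (fun σ => beta T (xs σ)) chainx a ha b hb)
      (cyc_const ht (fun σ => beta T (xs σ)) chainx b hb a ha)
  have hby : ∀ a < t, ∀ b < t, beta T (ys a) = beta T (ys b) := by
    intro a ha b hb
    exact le_antisymm (cyc_const ht (fun σ => beta T (ys σ)) chainy a ha b hb)
      (cyc_const ht (fun σ => beta T (ys σ)) chainy b hb a ha)
  -- equal beta within T forces distance < t
  have span : ∀ a b, a ∈ T → b ∈ T → a ≤ b → beta T a = beta T b → b - a ≤ t - 1 := by
    intro a b ha hb hab heq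
    by_contra hcon
    push_neg at hcon
    apply claim1 ht hT hM a
    intro i hi
    rcases Nat.lt_or_ge i (b - a) with h' | h'
    · exact beta_eq_imp_run T hab heq (Finset.mem_Ico.mpr ⟨by omega, by omega⟩)
    · have : a + i = b := by omega
      rw [this]; exact hb
  -- the xs family forms an interval starting at 0
  classical
  set X := Finset.image xs (Finset.range t) with hX
  set Y := Finset.image ys (Finset.range t) with hY
  have hXcard : X.card = t := by
    rw [hX, Finset.card_image_of_injOn, Finset.card_range]
    intro a ha b hb hab
    rw [Finset.mem_coe, Finset.mem_range] at ha hb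
    rw [← hxr a (Finset.mem_range.mpr ha), ← hxr b (Finset.mem_range.mpr hb), hab]
  have hYcard : Y.card = t := by
    rw [hY, Finset.card_image_of_injOn, Finset.card_range]
    intro a ha b hb hab
    rw [Finset.mem_coe, Finset.mem_range] at ha hb
    rw [← hyr a (Finset.mem_range.mpr ha), ← hyr b (Finset.mem_range.mpr hb), hab]
  have hXsubT : X ⊆ T := by
    intro x hx
    rw [hX, Finset.mem_image] at hx
    obtain ⟨σ, hσ, rfl⟩ := hx
    exact hxT σ hσ
  have hYsubT : Y ⊆ T := by
    intro x hx
    rw [hY, Finset.mem_image] at hx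
    obtain ⟨σ, hσ, rfl⟩ := hx
    exact hyT σ hσ
  have hXne : X.Nonempty := by rw [← Finset.card_pos, hXcard]; omega
  have hYne : Y.Nonempty := by rw [← Finset.card_pos, hYcard]; omega
  -- interval structure
  have hintX : ∀ (m : ℕ), m ∈ X → (∀ x ∈ X, m ≤ x) → X = Finset.Icc m (m + (t - 1)) := by
    intro m hm hmle
    apply Finset.eq_of_subset_of_card_le
    · intro x hx
      rw [Finset.mem_Icc]
      refine ⟨hmle x hx, ?_⟩
      rw [hX, Finset.mem_image] at hx hm
      obtain ⟨σ, hσ, rfl⟩ := hx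
      obtain ⟨σm, hσm, hme⟩ := hm
      have := span _ _ (hXsubT (by rw [hX]; exact Finset.mem_image_of_mem xs hσm))
        (hXsubT (by rw [hX]; exact Finset.mem_image_of_mem xs hσ))
        (by rw [hme]; exact hmle _ (by rw [hX]; exact Finset.mem_image_of_mem xs hσ))
        (hbx σm (Finset.mem_range.mp hσm) σ (Finset.mem_range.mp hσ))
      omega
    · rw [Nat.card_Icc, hXcard]; omega
  have hintY : ∀ (m : ℕ), m ∈ Y → (∀ x ∈ Y, m ≤ x) → Y = Finset.Icc m (m + (t - 1)) := by
    intro m hm hmle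
    apply Finset.eq_of_subset_of_card_le
    · intro x hx
      rw [Finset.mem_Icc]
      refine ⟨hmle x hx, ?_⟩
      rw [hY, Finset.mem_image] at hx hm
      obtain ⟨σ, hσ, rfl⟩ := hx
      obtain ⟨σm, hσm, hme⟩ := hm
      have := span _ _ (hYsubT (by rw [hY]; exact Finset.mem_image_of_mem ys hσm))
        (hYsubT (by rw [hY]; exact Finset.mem_image_of_mem ys hσ))
        (by rw [hme]; exact hmle _ (by rw [hY]; exact Finset.mem_image_of_mem ys hσ))
        (hby σm (Finset.mem_range.mp hσm) σ (Finset.mem_range.mp hσ))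
      omega
    · rw [Nat.card_Icc, hYcard]; omega
  -- 0 is in X
  have h0X : (0 : ℕ) ∈ X := by
    have h0r : (0 : ℕ) % t = 0 := Nat.zero_mod t
    have h0' : (0 : ℕ) ∈ Finset.range t := Finset.mem_range.mpr (by omega)
    rcases hcov 0 h0' 0 h0 h0r with h | h
    · rw [hX]; rw [h]; exact Finset.mem_image_of_mem xs h0'
    · exfalso
      have := hlt' 0 h0'
      omega
  have hXeq : X = Finset.Icc 0 (t - 1) := by
    have := hintX 0 h0X (fun x _ => Nat.zero_le x)
    simpa using this
  -- Y is an interval [e, e+t-1]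
  set e := Y.min' hYne with he
  have hYeq : Y = Finset.Icc e (e + (t - 1)) := hintY e (Y.min'_mem hYne) (fun x hx => Y.min'_le x hx)
  -- X and Y are disjoint
  have hdisj : Disjoint X Y := by
    rw [Finset.disjoint_left]
    intro v hvX hvY
    rw [hX, Finset.mem_image] at hvX
    rw [hY, Finset.mem_image] at hvY
    obtain ⟨σ1, hσ1, he1⟩ := hvX
    obtain ⟨σ2, hσ2, he2⟩ := hvY
    have : σ1 = σ2 := by
      rw [← hxr σ1 hσ1, ← hyr σ2 hσ2, he1, he2]
    subst this
    have := hlt' σ1 hσ1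
    omega
  -- T = X ∪ Y
  have hTeq : T = X ∪ Y := by
    symm
    apply Finset.eq_of_subset_of_card_le (Finset.union_subset hXsubT hYsubT)
    rw [Finset.card_union_of_disjoint hdisj, hXcard, hYcard, hT]
    omega
  -- e ≥ t+1
  have heT : e ∈ T := hYsubT (Y.min'_mem hYne)
  have heX : e ∉ X := Finset.disjoint_left.mp hdisj.symm (Y.min'_mem hYne)
  have het : t ≤ e := by
    by_contra hcon
    push_neg at hcon
    exact heX (by rw [hXeq, Finset.mem_Icc]; omega)
  have het1 : t + 1 ≤ e := by
    rcases eq_or_lt_of_le het with h | h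
    · exfalso
      apply claim1 ht hT hM 0
      intro i hi
      rcases Nat.lt_or_ge i t with h' | h'
      · exact hXsubT (by rw [hXeq, Finset.mem_Icc]; omega)
      · have : i = e := by omega
        rw [Nat.zero_add, this]; exact heT
    · omega
  refine ⟨e, het1, ?_⟩
  rw [hTeq, hXeq, hYeq]
  congr 1
  · ext x; simp only [Finset.mem_Icc, Finset.mem_range]; omega
  · ext x; simp only [Finset.mem_Icc, Finset.mem_Ico]; omega
-- window lemma: each residue appears exactly once in a window of t consecutive integers
lemma window (t d ρ : ℕ) (ht : 1 ≤ t) :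
    ∃! u, u ∈ Finset.Ico d (d + t) ∧ u % t = ρ % t := by
  classical
  have hinj : Set.InjOn (fun i => (d + i) % t) (Finset.range t : Set ℕ) := by
    intro i hi j hj hij
    simp only [Finset.mem_coe, Finset.mem_range] at hi hj
    simp only at hij
    have h1 : i % t = j % t := by
      have := Nat.ModEq.add_left_cancel' d (hij : (d + i) % t = (d + j) % t)
      exact this
    rwa [Nat.mod_eq_of_lt hi, Nat.mod_eq_of_lt hj] at h1
  have himg : Finset.image (fun i => (d + i) % t) (Finset.range t) = Finset.range t := by
    apply Finset.eq_of_subset_of_card_le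
    · intro x hx
      rw [Finset.mem_image] at hx
      obtain ⟨i, _, rfl⟩ := hx
      exact Finset.mem_range.mpr (Nat.mod_lt _ (by omega))
    · rw [Finset.card_image_of_injOn hinj]
  have hmem : ρ % t ∈ Finset.image (fun i => (d + i) % t) (Finset.range t) := by
    rw [himg]; exact Finset.mem_range.mpr (Nat.mod_lt _ (by omega))
  rw [Finset.mem_image] at hmem
  obtain ⟨j, hj, hje⟩ := hmem
  rw [Finset.mem_range] at hj
  refine ⟨d + j, ⟨Finset.mem_Ico.mpr ⟨by omega, by omega⟩, hje⟩, ?_⟩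
  rintro u ⟨hu, hur⟩
  rw [Finset.mem_Ico] at hu
  -- u ≡ d + j mod t, both in [d, d+t)
  have h1 : u % t = (d + j) % t := by rw [hur, hje]
  have h2 : u = d + (u - d) := by omega
  have h3 : (u - d) % t = j % t := by
    rw [h2] at h1
    exact Nat.ModEq.add_left_cancel' d h1
  rw [Nat.mod_eq_of_lt (by omega), Nat.mod_eq_of_lt hj] at h3
  omega

/-- forward direction: every vertex of an arc-pair has a unique neighbor -/
lemma prop_forward (t e : ℕ) (ht : 1 ≤ t) (he : t + 1 ≤ e) (v : ℕ)
    (hv : v ∈ Finset.range t ∪ Finset.Ico e (e + t)) :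
    ∃! u, u ∈ Finset.range t ∪ Finset.Ico e (e + t) ∧ nadj t v u := by
  classical
  have hnear : ∀ a b : ℕ, a ∈ Finset.range t → b ∈ Finset.range t → ¬ nadj t a b := by
    intro a b ha hb hadj
    rw [Finset.mem_range] at ha hb
    obtain ⟨hne, hmod, hd1⟩ := hadj
    exact small_dist ht hmod hd1 (fun h => hne (Nat.eq_of_dist_eq_zero h))
      (by rw [Nat.dist]; omega)
  have hnear2 : ∀ a b : ℕ, a ∈ Finset.Ico e (e + t) → b ∈ Finset.Ico e (e + t) →
      ¬ nadj t a b := by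
    intro a b ha hb hadj
    rw [Finset.mem_Ico] at ha hb
    obtain ⟨hne, hmod, hd1⟩ := hadj
    exact small_dist ht hmod hd1 (fun h => hne (Nat.eq_of_dist_eq_zero h))
      (by rw [Nat.dist]; omega)
  rw [Finset.mem_union] at hv
  rcases hv with hv | hv
  · -- v in lower arc; unique neighbor in upper arc with residue v+1
    obtain ⟨u, ⟨huI, hur⟩, huniq⟩ := window t e (v + 1) ht
    have hvt : v < t := Finset.mem_range.mp hv
    have huIco := Finset.mem_Ico.mp huI
    have hadj : nadj t v u := by
      refine ⟨by omega, ?_, ?_⟩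
      · rw [nadj_dist (by omega : v ≤ u)]
        exact (mod_iff_res (by omega : v ≤ u)).mpr hur
      · rw [nadj_dist (by omega : v ≤ u)]; omega
    refine ⟨u, ⟨Finset.mem_union_right _ huI, hadj⟩, ?_⟩
    rintro u' ⟨hu'm, hu'adj⟩
    rw [Finset.mem_union] at hu'm
    rcases hu'm with hu'm | hu'm
    · exact absurd hu'adj (hnear v u' hv hu'm)
    · apply huniq
      refine ⟨hu'm, ?_⟩
      have hu'Ico := Finset.mem_Ico.mp hu'm
      have hle : v ≤ u' := by omega
      have := hu'adj.2.1
      rw [nadj_dist hle] at this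
      exact (mod_iff_res hle).mp this
  · -- v in upper arc; unique neighbor in lower arc with residue v-1
    obtain ⟨u, ⟨huI, hur⟩, huniq⟩ := window t 0 (v + (t - 1)) ht
    rw [Nat.zero_add] at huI
    have hvIco := Finset.mem_Ico.mp hv
    have hut : u < t := Finset.mem_Ico.mp huI |>.2
    have hures : v % t = (u + 1) % t := by
      rw [mod_add_one hur, Nat.mod_add_mod, show v + (t - 1) + 1 = v + t by omega,
        Nat.add_mod_right]
    have hadj : nadj t v u := by
      refine ⟨by omega, ?_, ?_⟩
      · rw [Nat.dist_comm, nadj_dist (by omega : u ≤ v)]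
        exact (mod_iff_res (by omega : u ≤ v)).mpr hures
      · rw [Nat.dist_comm, nadj_dist (by omega : u ≤ v)]; omega
    refine ⟨u, ⟨Finset.mem_union_left _ (Finset.mem_range.mpr hut), hadj⟩, ?_⟩
    rintro u' ⟨hu'm, hu'adj⟩
    rw [Finset.mem_union] at hu'm
    rcases hu'm with hu'm | hu'm
    · apply huniq
      have hu't : u' < t := Finset.mem_range.mp hu'm
      refine ⟨Finset.mem_Ico.mpr ⟨by omega, by omega⟩, ?_⟩
      have hle : u' ≤ v := by omega
      have hmod := hu'adj.2.1
      rw [Nat.dist_comm, nadj_dist hle] at hmod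
      have h2 : v % t = (u' + 1) % t := (mod_iff_res hle).mp hmod
      -- derive u' % t = (v + (t-1)) % t
      have h3 : (u' % t + 1) % t = v % t := by
        rw [← mod_add_one (rfl : u' % t = u' % t), ← h2]
      have h4 : u' % t = (v % t + t - 1) % t :=
        mod_pred (Nat.mod_lt _ (by omega)) (Nat.mod_lt _ (by omega)) h3
      rw [h4, show v % t + t - 1 = v % t + (t - 1) by omega, Nat.mod_add_mod]
    · exact absurd hu'adj (hnear2 v u' hv hu'm)

section Transfer
variable {t k : ℕ} (ht : 1 ≤ t) (hk : 4 ≤ k)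

local notation "n" => t * (k - 1) + 2

lemma hn_ge (hk : 4 ≤ k) : 3 * t + 2 ≤ n := by
  have : 3 ≤ k - 1 := by omega
  nlinarith [Nat.mul_le_mul_left t this]

lemma hn_mod : n % t = 2 % t := Nat.mul_add_mod t (k-1) 2

instance : NeZero (t * (k - 1) + 2) := ⟨by omega⟩

/-- flip of residue condition under w ↦ n - w -/
lemma flip_mod (hw1 : 1 ≤ w) (hw2 : w ≤ n - 1) (h : w % t = 1 % t) :
    (n - w) % t = 1 % t := by
  have hmod : n % t = 2 % t := hn_mod
  have hsum : (n - w) + w = n := by omega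
  have h2 : (n - w) + w ≡ 1 + w [MOD t] := by
    rw [hsum]
    calc n ≡ 2 [MOD t] := hmod
      _ = 1 + 1 := by omega
      _ ≡ 1 + w [MOD t] := Nat.ModEq.add_left 1 (Nat.ModEq.symm h)
  exact Nat.ModEq.add_right_cancel' w h2

lemma GA'_adj (x y : ZMod n) :
    (GA' t k).Adj x y ↔ x ≠ y ∧ ((y - x).val % t = 1 % t ∧
      (y - x).val ≠ 1 ∧ (y - x).val ≠ n - 1) := by
  have hrw : t * (k - 1) + 1 = n - 1 := by omega
  rw [GA', SimpleGraph.fromRel_adj]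
  constructor
  · rintro ⟨hne, h | h⟩
    · exact ⟨hne, h.1, h.2.1, by rw [← hrw]; exact h.2.2⟩
    · -- symmetrize
      obtain ⟨h1, h2, h3⟩ := h
      rw [hrw] at h3
      have hne' : y - x ≠ 0 := fun h0 => hne (by
        have := sub_eq_zero.mp h0; exact this.symm)
      have hne'' : x - y ≠ 0 := fun h0 => hne (sub_eq_zero.mp h0)
      have hval : (y - x).val = n - (x - y).val := by
        rw [show y - x = -(x - y) by ring, ZMod.neg_val]
        simp [hne'']
      have hv1 : 1 ≤ (x - y).val := by
        rcases Nat.eq_zero_or_pos (x - y).val with h0 | h0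
        · exact absurd ((ZMod.val_eq_zero _).mp h0) hne''
        · omega
      have hv2 : (x - y).val ≤ n - 1 := by
        have := ZMod.val_lt (x - y); omega
      refine ⟨hne, ?_, ?_, ?_⟩
      · rw [hval]; exact flip_mod hv1 hv2 h1
      · rw [hval]; intro hcon
        apply h3; omega
      · rw [hval]; intro hcon
        apply h2; omega
  · rintro ⟨hne, h1, h2, h3⟩
    exact ⟨hne, Or.inl ⟨h1, h2, by rw [hrw]; exact h3⟩⟩

end Transfer

section Transfer2
variable {t k : ℕ}

local notation "n" => t * (k - 1) + 2

-- casting small naturals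
lemma val_add_cast (c : ZMod n) (p q : ℕ) (hpq : p ≤ q) (hq : q < n) :
    ((c + (q : ℕ)) - (c + (p : ℕ))).val = q - p := by
  have : (c + (q : ℕ)) - (c + (p : ℕ)) = ((q - p : ℕ) : ZMod n) := by
    push_cast [Nat.cast_sub hpq]
    ring
  rw [this, ZMod.val_natCast, Nat.mod_eq_of_lt (by omega)]

lemma cast_inj_small (p q : ℕ) (hp : p < n) (hq : q < n)
    (h : ((p : ℕ) : ZMod n) = ((q : ℕ) : ZMod n)) : p = q := by
  have h1 := congrArg ZMod.val h
  rwa [ZMod.val_natCast, ZMod.val_natCast, Nat.mod_eq_of_lt hp, Nat.mod_eq_of_lt hq] at h1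

lemma add_cast_inj (c : ZMod n) (p q : ℕ) (hp : p < n) (hq : q < n)
    (h : c + (p : ℕ) = c + (q : ℕ)) : p = q :=
  cast_inj_small p q hp hq (by
    have := add_left_cancel h
    exact_mod_cast this)

/-- the core transfer: graph adjacency equals ℕ-side adjacency for offsets ≤ n-2 -/
lemma adj_iff_nadj (ht : 1 ≤ t) (c : ZMod n) (p q : ℕ)
    (hp : p ≤ n - 2) (hq : q ≤ n - 2) :
    (GA' t k).Adj (c + (p : ℕ)) (c + (q : ℕ)) ↔ nadj t p q := by
  rcases Nat.le_total p q with hle | hle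
  · rw [GA'_adj]
    have hval := val_add_cast c p q hle (by omega)
    constructor
    · rintro ⟨hne, h1, h2, _⟩
      rw [hval] at h1 h2
      refine ⟨?_, ?_, ?_⟩
      · intro h; exact hne (by rw [h])
      · rwa [nadj_dist hle]
      · rwa [nadj_dist hle]
    · rintro ⟨hne, h1, h2⟩
      rw [nadj_dist hle] at h1 h2
      refine ⟨?_, ?_, ?_, ?_⟩
      · intro h; exact hne (add_cast_inj c p q (by omega) (by omega) h)
      · rwa [hval]
      · rwa [hval]
      · rw [hval]; omega
  · -- symmetric case
    have base : (GA' t k).Adj (c + (q : ℕ)) (c + (p : ℕ)) ↔ nadj t q p := by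
      rw [GA'_adj]
      have hval := val_add_cast c q p hle (by omega)
      constructor
      · rintro ⟨hne, h1, h2, _⟩
        rw [hval] at h1 h2
        refine ⟨?_, ?_, ?_⟩
        · intro h; exact hne (by rw [h])
        · rwa [nadj_dist hle]
        · rwa [nadj_dist hle]
      · rintro ⟨hne, h1, h2⟩
        rw [nadj_dist hle] at h1 h2
        refine ⟨?_, ?_, ?_, ?_⟩
        · intro h; exact hne (add_cast_inj c q p (by omega) (by omega) h)
        · rwa [hval]
        · rwa [hval]
        · rw [hval]; omega
    constructor
    · intro h
      exact nadj_symm (base.mp h.symm)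
    · intro h
      exact ((GA' t k).adj_symm (base.mpr (nadj_symm h)))

end Transfer2

section ArcF
variable {t k : ℕ}

local notation "n" => t * (k - 1) + 2

def arcSet (t d : ℕ) : Finset ℕ := Finset.range t ∪ Finset.Ico d (d + t)

def arcF (t k : ℕ) (a : ZMod (t * (k - 1) + 2)) (d : ℕ) : Finset (ZMod (t * (k - 1) + 2)) :=
  (arcSet t d).image (fun p => a + (p : ℕ))

lemma arcSet_bound (ht : 1 ≤ t) (hk : 4 ≤ k) {d : ℕ} (hd : d ∈ Finset.Icc (t + 1) (n - t - 1))
    {p : ℕ} (hp : p ∈ arcSet t d) : p ≤ n - 2 := by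
  rw [Finset.mem_Icc] at hd
  rw [arcSet, Finset.mem_union, Finset.mem_range, Finset.mem_Ico] at hp
  have := hn_ge (t := t) (k := k) hk
  rcases hp with h | h <;> omega

lemma arcF_card (ht : 1 ≤ t) (hk : 4 ≤ k) (a : ZMod n) {d : ℕ}
    (hd : d ∈ Finset.Icc (t + 1) (n - t - 1)) : (arcF t k a d).card = 2 * t := by
  have hnge := hn_ge (t := t) (k := k) hk
  rw [Finset.mem_Icc] at hd
  rw [arcF, Finset.card_image_of_injOn]
  · rw [arcSet, Finset.card_union_of_disjoint, Finset.card_range, Nat.card_Ico]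
    · omega
    · rw [Finset.disjoint_left]
      intro x hx hx2
      rw [Finset.mem_range] at hx
      rw [Finset.mem_Ico] at hx2
      omega
  · intro p hp q hq hpq
    rw [Finset.mem_coe] at hp hq
    exact add_cast_inj a p q
      (by have := arcSet_bound ht hk (Finset.mem_Icc.mpr hd) hp; omega)
      (by have := arcSet_bound ht hk (Finset.mem_Icc.mpr hd) hq; omega) hpq

lemma arcF_solution (ht : 1 ≤ t) (hk : 4 ≤ k) (a : ZMod n) {d : ℕ}
    (hd : d ∈ Finset.Icc (t + 1) (n - t - 1)) :
    ∀ v ∈ arcF t k a d, ((GA' t k).neighborSet v ∩ ↑(arcF t k a d)).ncard = 1 := by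
  have hnge := hn_ge (t := t) (k := k) hk
  have hd' := Finset.mem_Icc.mp hd
  intro v hv
  rw [arcF, Finset.mem_image] at hv
  obtain ⟨p, hp, rfl⟩ := hv
  obtain ⟨u, ⟨huU, hunadj⟩, huniq⟩ := prop_forward t d ht hd'.1 p hp
  have hset : (GA' t k).neighborSet (a + (p : ℕ)) ∩ ↑(arcF t k a d) = {a + (u : ℕ)} := by
    ext x
    simp only [Set.mem_inter_iff, SimpleGraph.mem_neighborSet, Set.mem_singleton_iff,
      Finset.coe_image, Set.mem_image, arcF, Finset.mem_coe]
    constructor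
    · rintro ⟨hadj, q, hq, rfl⟩
      have hnq : nadj t p q := (adj_iff_nadj ht a p q (arcSet_bound ht hk hd hp)
        (arcSet_bound ht hk hd hq)).mp hadj
      rw [huniq q ⟨hq, hnq⟩]
    · rintro rfl
      refine ⟨(adj_iff_nadj ht a p u (arcSet_bound ht hk hd hp)
        (arcSet_bound ht hk hd huU)).mpr hunadj, u, huU, rfl⟩
  rw [hset, Set.ncard_singleton]

end ArcF

section Converse
variable {t k : ℕ}

local notation "n" => t * (k - 1) + 2

lemma cast_val_eq (a : ZMod n) : ((a.val : ℕ) : ZMod n) = a :=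
  ZMod.natCast_rightInverse a

lemma solution_to_arcF (ht : 1 ≤ t) (hk : 4 ≤ k) (S : Finset (ZMod n))
    (hcard : S.card = 2 * t)
    (hnbr : ∀ v ∈ S, ((GA' t k).neighborSet v ∩ ↑S).ncard = 1) :
    ∃ a, ∃ d ∈ Finset.Icc (t + 1) (n - t - 1), S = arcF t k a d := by
  classical
  have hnge := hn_ge (t := t) (k := k) hk
  -- unique-neighbor form
  have hex : ∀ v ∈ S, ∃! u, u ∈ S ∧ (GA' t k).Adj v u := by
    intro v hv
    obtain ⟨w, hw⟩ := Set.ncard_eq_one.mp (hnbr v hv)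
    have hwmem : w ∈ (GA' t k).neighborSet v ∩ ↑S := by rw [hw]; rfl
    obtain ⟨hw1, hw2⟩ := hwmem
    refine ⟨w, ⟨hw2, hw1⟩, ?_⟩
    rintro u ⟨huS, huadj⟩
    have : u ∈ (GA' t k).neighborSet v ∩ ↑S := ⟨huadj, huS⟩
    rwa [hw, Set.mem_singleton_iff] at this
  -- find a run start
  have hcstart : ∃ c ∈ S, c - 1 ∉ S := by
    by_contra hno
    push_neg at hno
    have hSne : S.Nonempty := Finset.card_pos.mp (by omega)
    obtain ⟨v₀, hv₀⟩ := hSne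
    have hstep : ∀ j : ℕ, v₀ - (j : ℕ) ∈ S := by
      intro j
      induction j with
      | zero => simpa using hv₀
      | succ j ih =>
        have : v₀ - ((j + 1 : ℕ) : ZMod n) = (v₀ - (j : ℕ)) - 1 := by
          push_cast; ring
        rw [this]
        exact hno _ ih
    have huniv : S = Finset.univ := by
      rw [Finset.eq_univ_iff_forall]
      intro x
      have := hstep (v₀ - x).val
      rwa [cast_val_eq, sub_sub_cancel] at this
    have hcu : S.card = n := by rw [huniv, Finset.card_univ, ZMod.card]
    omega
  obtain ⟨c, hc, hc1⟩ := hcstart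
  -- the lift to ℕ
  set T : Finset ℕ := S.image (fun v => (v - c).val) with hTdef
  have hTcard : T.card = 2 * t := by
    rw [hTdef, Finset.card_image_of_injOn, hcard]
    intro v hv w hw hvw
    simp only at hvw
    have : v - c = w - c := by
      rw [← cast_val_eq (v - c), ← cast_val_eq (w - c), hvw]
    exact sub_left_injective this
  have h0T : 0 ∈ T := by
    rw [hTdef, Finset.mem_image]
    exact ⟨c, hc, by rw [sub_self, ZMod.val_zero]⟩
  have hbound : ∀ p ∈ T, p ≤ n - 2 := by
    intro p hp
    rw [hTdef, Finset.mem_image] at hp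
    obtain ⟨v, hv, rfl⟩ := hp
    have hlt := ZMod.val_lt (v - c)
    have hne : (v - c).val ≠ n - 1 := by
      intro hcon
      apply hc1
      have : v - c = ((n - 1 : ℕ) : ZMod n) := (hcon ▸ cast_val_eq (v - c)).symm
      have hn1 : ((n - 1 : ℕ) : ZMod n) = -1 := by
        have h2 : ((n : ℕ) : ZMod n) = 0 := ZMod.natCast_self _
        have h3 : ((n - 1 : ℕ) : ZMod n) = ((n : ℕ) : ZMod n) - 1 := by
          rw [Nat.cast_sub (by omega)]
          simp
        rw [h3, h2]
        ring
      have hm : v - c = -1 := by rw [this, hn1]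
      have hv2 : v = c - 1 := by linear_combination hm
      rwa [hv2] at hv
    omega
  have hlift : ∀ p ∈ T, c + (p : ℕ) ∈ S ∧ ∀ v ∈ S, (v - c).val = p → v = c + (p : ℕ) := by
    intro p hp
    rw [hTdef, Finset.mem_image] at hp
    obtain ⟨v, hv, rfl⟩ := hp
    constructor
    · rwa [cast_val_eq, add_sub_cancel]
    · intro w hw hwe
      rw [← hwe, cast_val_eq, add_sub_cancel]
  have hM : ∀ p ∈ T, ∃! q, q ∈ T ∧ nadj t p q := by
    intro p hp
    have hpS := (hlift p hp).1
    obtain ⟨u, ⟨huS, huadj⟩, huniq⟩ := hex (c + (p : ℕ)) hpS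
    have hqT : (u - c).val ∈ T := by
      rw [hTdef, Finset.mem_image]; exact ⟨u, huS, rfl⟩
    have hcu : c + ((u - c).val : ℕ) = u := by rw [cast_val_eq, add_sub_cancel]
    refine ⟨(u - c).val, ⟨hqT, ?_⟩, ?_⟩
    · apply (adj_iff_nadj ht c p _ (hbound p hp) (hbound _ hqT)).mp
      rwa [hcu]
    · rintro q ⟨hqT', hqadj⟩
      have hqS := (hlift q hqT').1
      have : c + (q : ℕ) = u := by
        apply huniq
        exact ⟨hqS, (adj_iff_nadj ht c p q (hbound p hp) (hbound q hqT')).mpr hqadj⟩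
      rw [← this, add_sub_cancel_left, ZMod.val_natCast,
        Nat.mod_eq_of_lt (by have := hbound q hqT'; omega)]
  obtain ⟨e, he, hTeq⟩ := prop_main t ht T hTcard h0T hM
  have heub : e ≤ n - t - 1 := by
    have hmem : e + (t - 1) ∈ T := by
      rw [hTeq, Finset.mem_union, Finset.mem_Ico]
      right; omega
    have := hbound _ hmem
    omega
  refine ⟨c, e, Finset.mem_Icc.mpr ⟨he, heub⟩, ?_⟩
  rw [arcF, show arcSet t e = T from hTeq.symm]
  ext x
  rw [Finset.mem_image]
  constructor
  · intro hx
    refine ⟨(x - c).val, ?_, by rw [cast_val_eq, add_sub_cancel]⟩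
    rw [hTdef, Finset.mem_image]
    exact ⟨x, hx, rfl⟩
  · rintro ⟨p, hp, rfl⟩
    exact (hlift p hp).1

end Converse

section Counting
variable {t k : ℕ}

local notation "n" => t * (k - 1) + 2

lemma cast_nsub (d : ℕ) (hd : d ≤ n) : ((n - d : ℕ) : ZMod n) = -(d : ℕ) := by
  rw [Nat.cast_sub hd, ZMod.natCast_self]
  ring

lemma val_cast_sub_cast (y d : ℕ) (hy : y < n) (hd : d < n) :
    (((y : ℕ) : ZMod n) - ((d : ℕ) : ZMod n)).val = if d ≤ y then y - d else y + n - d := by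
  rcases le_or_gt d y with h | h
  · rw [if_pos h]
    have h1 : ((y : ℕ) : ZMod n) - ((d : ℕ) : ZMod n) = ((y - d : ℕ) : ZMod n) := by
      rw [Nat.cast_sub h]
    rw [h1, ZMod.val_natCast]
    exact Nat.mod_eq_of_lt (by omega)
  · rw [if_neg (by omega)]
    have h1 : ((y : ℕ) : ZMod n) - ((d : ℕ) : ZMod n) = ((y + n - d : ℕ) : ZMod n) := by
      rw [show y + n - d = y + (n - d) by omega, Nat.cast_add, cast_nsub d (by omega)]
      ring
    rw [h1, ZMod.val_natCast]
    exact Nat.mod_eq_of_lt (by omega)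

lemma mem_arcF (ht : 1 ≤ t) (hk : 4 ≤ k) (a : ZMod n) {d : ℕ}
    (hd : d ∈ Finset.Icc (t + 1) (n - t - 1)) (x : ZMod n) :
    x ∈ arcF t k a d ↔ (x - a).val < t ∨ (d ≤ (x - a).val ∧ (x - a).val < d + t) := by
  have hnge := hn_ge (t := t) (k := k) hk
  have hd' := Finset.mem_Icc.mp hd
  rw [arcF, Finset.mem_image]
  constructor
  · rintro ⟨p, hp, rfl⟩
    have hpb := arcSet_bound ht hk hd hp
    rw [add_sub_cancel_left, ZMod.val_natCast, Nat.mod_eq_of_lt (by omega)]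
    rw [arcSet, Finset.mem_union, Finset.mem_range, Finset.mem_Ico] at hp
    exact hp
  · intro hx
    refine ⟨(x - a).val, ?_, by rw [cast_val_eq, add_sub_cancel]⟩
    rw [arcSet, Finset.mem_union, Finset.mem_range, Finset.mem_Ico]
    exact hx

lemma arcF_flip (ht : 1 ≤ t) (hk : 4 ≤ k) (a : ZMod n) {d : ℕ}
    (hd : d ∈ Finset.Icc (t + 1) (n - t - 1)) :
    arcF t k (a + (d : ℕ)) (n - d) = arcF t k a d := by
  have hnge := hn_ge (t := t) (k := k) hk
  have hd' := Finset.mem_Icc.mp hd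
  have hd2 : n - d ∈ Finset.Icc (t + 1) (n - t - 1) := Finset.mem_Icc.mpr ⟨by omega, by omega⟩
  ext x
  rw [mem_arcF ht hk _ hd2 x, mem_arcF ht hk a hd x]
  have hkey : (x - (a + (d : ℕ))).val
      = if d ≤ (x - a).val then (x - a).val - d else (x - a).val + n - d := by
    have h1 : x - (a + (d : ℕ)) = (((x - a).val : ℕ) : ZMod n) - (d : ℕ) := by
      rw [cast_val_eq]; ring
    rw [h1, val_cast_sub_cast _ _ (ZMod.val_lt _) (by omega)]
  rw [hkey]
  have hvlt := ZMod.val_lt (x - a)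
  rcases le_or_gt d ((x - a).val) with h | h
  · rw [if_pos h]
    constructor
    · rintro (h2 | h2)
      · right; omega
      · omega
    · rintro (h2 | h2)
      · omega
      · left; omega
  · rw [if_neg (by omega)]
    constructor
    · rintro (h2 | h2)
      · omega
      · left; omega
    · rintro (h2 | h2)
      · right; omega
      · omega

lemma arcF_starts (ht : 1 ≤ t) (hk : 4 ≤ k) (a : ZMod n) {d : ℕ}
    (hd : d ∈ Finset.Icc (t + 1) (n - t - 1)) (x : ZMod n) :
    (x ∈ arcF t k a d ∧ x - 1 ∉ arcF t k a d) ↔ (x = a ∨ x = a + (d : ℕ)) := by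
  have hnge := hn_ge (t := t) (k := k) hk
  have hd' := Finset.mem_Icc.mp hd
  have hsub1 : ∀ y : ZMod n, (y - 1 - a).val
      = if 1 ≤ (y - a).val then (y - a).val - 1 else (y - a).val + n - 1 := by
    intro y
    have h1 : y - 1 - a = (((y - a).val : ℕ) : ZMod n) - ((1 : ℕ) : ℕ) := by
      rw [cast_val_eq]; push_cast; ring
    rw [h1, val_cast_sub_cast _ _ (ZMod.val_lt _) (by omega)]
  constructor
  · rintro ⟨hx, hx1⟩
    rw [mem_arcF ht hk a hd] at hx
    rw [mem_arcF ht hk a hd, hsub1 x] at hx1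
    push_neg at hx1
    rcases Nat.lt_or_ge ((x - a).val) 1 with h0 | h0
    · left
      have : (x - a).val = 0 := by omega
      have h2 : x - a = 0 := by
        rw [← cast_val_eq (x - a), this]; rfl
      linear_combination h2
    · rw [if_pos h0] at hx1
      obtain ⟨hA, hB⟩ := hx1
      right
      have : (x - a).val = d := by omega
      have h2 : x - a = ((d : ℕ) : ZMod n) := by rw [← cast_val_eq (x - a), this]
      linear_combination h2
  · intro hx
    have hval : (x - a).val = 0 ∨ (x - a).val = d := by
      rcases hx with rfl | rfl
      · left; rw [sub_self, ZMod.val_zero]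
      · right
        rw [add_sub_cancel_left, ZMod.val_natCast, Nat.mod_eq_of_lt (by omega)]
    constructor
    · rw [mem_arcF ht hk a hd]
      rcases hval with h | h
      · left; omega
      · right; omega
    · rw [mem_arcF ht hk a hd, hsub1 x]
      push_neg
      rcases hval with h | h
      · rw [if_neg (by omega)]
        constructor
        · omega
        · intro; omega
      · rw [if_pos (by omega)]
        constructor
        · omega
        · intro; omega

end Counting

section Final
variable {t k : ℕ}

local notation "n" => t * (k - 1) + 2

lemma cast_d_ne (ht : 1 ≤ t) {d : ℕ} (hd1 : 1 ≤ d) (hd2 : d < n) :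
    ((d : ℕ) : ZMod n) ≠ 0 := by
  intro hcon
  have := congrArg ZMod.val hcon
  rw [ZMod.val_natCast, Nat.mod_eq_of_lt hd2, ZMod.val_zero] at this
  omega

lemma arcF_eq (ht : 1 ≤ t) (hk : 4 ≤ k) {a a' : ZMod n} {d d' : ℕ}
    (hd : d ∈ Finset.Icc (t + 1) (n - t - 1)) (hd' : d' ∈ Finset.Icc (t + 1) (n - t - 1))
    (h : arcF t k a' d' = arcF t k a d) :
    (a' = a ∧ d' = d) ∨ (a' = a + (d : ℕ) ∧ d' = n - d) := by
  have hnge := hn_ge (t := t) (k := k) hk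
  have hdb := Finset.mem_Icc.mp hd
  have hdb' := Finset.mem_Icc.mp hd'
  have hstarts : ∀ x : ZMod n, (x = a' ∨ x = a' + (d' : ℕ)) ↔ (x = a ∨ x = a + (d : ℕ)) := by
    intro x
    rw [← arcF_starts ht hk a' hd' x, h, arcF_starts ht hk a hd x]
  have hda : ((d : ℕ) : ZMod n) ≠ 0 := cast_d_ne ht (by omega) (by omega)
  have hda' : ((d' : ℕ) : ZMod n) ≠ 0 := cast_d_ne ht (by omega) (by omega)
  have h1 := (hstarts a').mp (Or.inl rfl)
  have h2 := (hstarts (a' + (d' : ℕ))).mp (Or.inr rfl)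
  rcases h1 with h1 | h1
  · left
    refine ⟨h1, ?_⟩
    rcases h2 with h2 | h2
    · exfalso
      rw [h1] at h2
      exact hda' (by linear_combination h2)
    · rw [h1] at h2
      have hcast : ((d' : ℕ) : ZMod n) = ((d : ℕ) : ZMod n) := by linear_combination h2
      exact cast_inj_small d' d (by omega) (by omega) hcast
  · right
    refine ⟨h1, ?_⟩
    rcases h2 with h2 | h2
    · rw [h1] at h2
      have hcast : ((d' : ℕ) : ZMod n) = ((n - d : ℕ) : ZMod n) := by
        rw [cast_nsub d (by omega)]
        linear_combination h2
      exact cast_inj_small d' (n - d) (by omega) (by omega) hcast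
    · exfalso
      rw [h1] at h2
      exact hda' (by linear_combination h2)

end Final

/-- For `k ≥ 4`, the number of induced matchings of size `t` in `GA(t,k)'`
(vertex sets of size `2t` inducing a `1`-regular subgraph) equals
`(n/2)·(t(k-3)+1)` where `n = t(k-1)+2`. -/
theorem stmt_11 (t k : ℕ) (ht : 1 ≤ t) (hk : 4 ≤ k) :
    {S : Finset (ZMod (t * (k - 1) + 2)) | S.card = 2 * t ∧
        ∀ v ∈ S, ((GA' t k).neighborSet v ∩ ↑S).ncard = 1}.ncard =
      (t * (k - 1) + 2) * (t * (k - 3) + 1) / 2 := by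
  classical
  have hnge : 3 * t + 2 ≤ t * (k - 1) + 2 := hn_ge hk
  set D : Finset ℕ := Finset.Icc (t + 1) (t * (k - 1) + 2 - t - 1) with hD
  set Dom := (Finset.univ : Finset (ZMod (t * (k - 1) + 2))) ×ˢ D with hDom
  set Img := Dom.image (fun p => arcF t k p.1 p.2) with hImg
  -- the solution set is exactly Img
  have hset : {S : Finset (ZMod (t * (k - 1) + 2)) | S.card = 2 * t ∧
      ∀ v ∈ S, ((GA' t k).neighborSet v ∩ ↑S).ncard = 1} = ↑Img := by
    ext S
    rw [Set.mem_setOf_eq, Finset.mem_coe, hImg, Finset.mem_image]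
    constructor
    · rintro ⟨h1, h2⟩
      obtain ⟨a, d, hd, rfl⟩ := solution_to_arcF ht hk S h1 h2
      exact ⟨(a, d), Finset.mem_product.mpr ⟨Finset.mem_univ a, hd⟩, rfl⟩
    · rintro ⟨⟨a, d⟩, hmem, rfl⟩
      have hd : d ∈ D := (Finset.mem_product.mp hmem).2
      exact ⟨arcF_card ht hk a hd, arcF_solution ht hk a hd⟩
  -- fibers have cardinality 2
  have hfiber : ∀ s ∈ Img, (Dom.filter (fun p => arcF t k p.1 p.2 = s)).card = 2 := by
    intro s hs
    rw [hImg, Finset.mem_image] at hs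
    obtain ⟨⟨a, d⟩, hmem, rfl⟩ := hs
    have hd : d ∈ D := (Finset.mem_product.mp hmem).2
    have hdb := Finset.mem_Icc.mp hd
    have hflip : (t * (k - 1) + 2 - d) ∈ D := Finset.mem_Icc.mpr ⟨by omega, by omega⟩
    have hfe : Dom.filter (fun p => arcF t k p.1 p.2 = arcF t k a d)
        = {(a, d), (a + (d : ℕ), t * (k - 1) + 2 - d)} := by
      ext ⟨a', d'⟩
      rw [Finset.mem_filter, Finset.mem_insert, Finset.mem_singleton]
      constructor
      · rintro ⟨hmem', heq⟩
        have hd' : d' ∈ D := (Finset.mem_product.mp hmem').2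
        rcases arcF_eq ht hk hd hd' heq with ⟨he1, he2⟩ | ⟨he1, he2⟩
        · left; exact Prod.ext he1 he2
        · right; exact Prod.ext he1 he2
      · rintro (heq | heq)
        · simp only [Prod.mk.injEq] at heq
          obtain ⟨rfl, rfl⟩ := heq
          exact ⟨Finset.mem_product.mpr ⟨Finset.mem_univ _, hd⟩, rfl⟩
        · simp only [Prod.mk.injEq] at heq
          obtain ⟨rfl, rfl⟩ := heq
          exact ⟨Finset.mem_product.mpr ⟨Finset.mem_univ _, hflip⟩, arcF_flip ht hk a hd⟩
    rw [hfe]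
    rw [Finset.card_insert_of_notMem, Finset.card_singleton]
    rw [Finset.mem_singleton]
    intro hcon
    have h1 : a = a + ((d : ℕ) : ZMod (t * (k - 1) + 2)) := congrArg Prod.fst hcon
    have hb1 : 1 ≤ d := by omega
    have hb2 : d < t * (k - 1) + 2 := by omega
    exact cast_d_ne ht hb1 hb2 (by linear_combination h1.symm)
  -- counting
  have hDomcard : Dom.card = (t * (k - 1) + 2) * (t * (k - 3) + 1) := by
    rw [hDom, Finset.card_product, Finset.card_univ, ZMod.card, hD, Nat.card_Icc]
    have hsplit : t * (k - 1) = t * (k - 3) + 2 * t := by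
      rw [show k - 1 = (k - 3) + 2 by omega]
      ring
    congr 1
    omega
  have hsum : Dom.card = 2 * Img.card := by
    rw [Finset.card_eq_sum_card_fiberwise
      (fun p hp => (Finset.mem_image_of_mem (fun p => arcF t k p.1 p.2) hp : _))]
    rw [Finset.sum_congr rfl hfiber, Finset.sum_const, smul_eq_mul]
    ring
  rw [hset, Set.ncard_coe_finset]
  omega
end
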